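/- Let p > 3 be a prime and let G = Φ₄₀(1⁶) be the group of order p⁶ with presentation on generators α₁, α₂, β, β₁, β₂, γ and relations [α₁,α₂] = β, [β,α₁] = β₁, [β,α₂] = β₂, [β₁,α₂] = γ, [β₂,α₁] = γ, α₁ᵖ = α₂ᵖ = βᵖ = β₁ᵖ = β₂ᵖ = γᵖ = 1, with every commutator of a pair of generators not listed among these relations declared trivial. Then the Bogomolov multiplier B₀(G) is trivial. -/

import Mathlib

/-!
Φ₄₀(1⁶): relations [α₁,α₂]=β, [β,α₁]=β₁, [β,α₂]=β₂, [β₁,α₂]=γ, [β₂,α₁]=γ,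
all pth powers trivial.
-/

namespace Stmt13

/-- The additive group `ℚ/ℤ`. -/
abbrev QZ : Type := ℚ ⧸ AddSubgroup.zmultiples (1 : ℚ)

/-- An inhomogeneous 2-cocycle on `G` with values in `ℚ/ℤ` (trivial `G`-action). -/
def IsTwoCocycle {G : Type} [Group G] (f : G → G → QZ) : Prop :=
  ∀ g h j : G, f h j - f (g * h) j + f g (h * j) - f g h = 0

/-- An inhomogeneous 2-coboundary on `G` with values in `ℚ/ℤ` (trivial `G`-action). -/
def IsTwoCoboundary {G : Type} [Group G] (f : G → G → QZ) : Prop :=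
  ∃ c : G → QZ, ∀ g h : G, f g h = c h - c (g * h) + c g

/-- A subgroup is bicyclic if it is abelian and generated by at most two elements
(equivalently, cyclic or a direct product of two cyclic groups). -/
def IsBicyclic {G : Type} [Group G] (A : Subgroup G) : Prop :=
  (∀ x y : A, x * y = y * x) ∧ ∃ a b : G, A = Subgroup.closure {a, b}

/-- The Bogomolov multiplier `B₀(G) ⊆ H²(G, ℚ/ℤ)` is trivial, phrased at the level of
2-cocycles: every 2-cocycle whose restriction to each bicyclic subgroup is a coboundary
(i.e. whose class restricts to zero on each bicyclic subgroup) is itself a coboundary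
(i.e. its class is zero). -/
def BogomolovMultiplierIsTrivial (G : Type) [Group G] : Prop :=
  ∀ f : G → G → QZ, IsTwoCocycle f →
    (∀ A : Subgroup G, IsBicyclic A → IsTwoCoboundary (fun a b : ↥A => f ↑a ↑b)) →
    IsTwoCoboundary f

/-- The Bogomolov multiplier `B₀(G) ⊆ H²(G, ℚ/ℤ)` is nontrivial, phrased at the level of
2-cocycles. -/
def BogomolovMultiplierIsNontrivial (G : Type) [Group G] : Prop :=
  ∃ f : G → G → QZ, IsTwoCocycle f ∧
    (∀ A : Subgroup G, IsBicyclic A → IsTwoCoboundary (fun a b : ↥A => f ↑a ↑b)) ∧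
    ¬ IsTwoCoboundary f

/-- The generators. -/
inductive Gen | a1 | a2 | b | b1 | b2 | g

open FreeGroup

/-- The commutator `[x,y] = x⁻¹y⁻¹xy`. -/
def c (x y : FreeGroup Gen) : FreeGroup Gen := x⁻¹ * y⁻¹ * x * y

/-- The defining relators. -/
def rels (p : ℕ) : Set (FreeGroup Gen) :=
  { c (of .a1) (of .a2) * (of Gen.b)⁻¹,
    c (of .b) (of .a1) * (of Gen.b1)⁻¹,
    c (of .b) (of .a2) * (of Gen.b2)⁻¹,
    c (of .b1) (of .a2) * (of Gen.g)⁻¹,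
    c (of .b2) (of .a1) * (of Gen.g)⁻¹,
    c (of .a1) (of .b1),
    c (of .a1) (of .g),
    c (of .a2) (of .b2),
    c (of .a2) (of .g),
    c (of .b) (of .b1),
    c (of .b) (of .b2),
    c (of .b) (of .g),
    c (of .b1) (of .b2),
    c (of .b1) (of .g),
    c (of .b2) (of .g),
    (of Gen.a1) ^ p,
    (of Gen.a2) ^ p,
    (of Gen.b) ^ p,
    (of Gen.b1) ^ p,
    (of Gen.b2) ^ p,
    (of Gen.g) ^ p }

/-!
A class in `B₀(G)` is represented by a 2-cocycle `f` that is symmetric on commuting pairs, so in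
the central extension `E` of `G` by `ℚ/ℤ` defined by `f`, elements lying over commuting elements of
`G` commute. As `ℚ/ℤ` is divisible, `α₁` and `α₂` have lifts `x, y ∈ E` of order dividing `p`, and
the iterated commutators of `x` and `y` satisfy every defining relation of `G`: the commutation
relations lift, `[β₁, α₂] = [β₂, α₁]` follows from a Hall–Witt type computation, and `βᵖ = 1` from
the Hall–Petrescu formula `[x, yⁿ] = [x, y]ⁿ [x, y, y]^(n choose 2)` for odd `p`. Hence `E → G`
splits and `f` is a coboundary.
-/

theorem dvd_choose_two_of_odd {n : ℕ} (hn : Odd n) : n ∣ n.choose 2 := by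
  obtain ⟨k, rfl⟩ := hn
  refine ⟨k, ?_⟩
  rw [Nat.choose_two_right, Nat.add_sub_cancel, show (2 * k + 1) * (2 * k) = 2 * ((2 * k + 1) * k)
    by ring, Nat.mul_div_cancel_left _ two_pos]

section Bracket

variable {H : Type*} [Group H]

def bracket (x y : H) : H := x⁻¹ * y⁻¹ * x * y

theorem c_eq_bracket (x y : FreeGroup Gen) : c x y = bracket x y := rfl

theorem map_bracket {K : Type*} [Group K] (φ : H →* K) (x y : H) :
    φ (bracket x y) = bracket (φ x) (φ y) := by
  simp only [bracket, _root_.map_mul, _root_.map_inv]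

theorem bracket_one_right (x : H) : bracket x 1 = 1 := by simp [bracket]

theorem bracket_self (x : H) : bracket x x = 1 := by simp [bracket]

theorem bracket_eq_one_iff {x y : H} : bracket x y = 1 ↔ Commute x y := by
  rw [bracket, show x⁻¹ * y⁻¹ * x * y = (y * x)⁻¹ * (x * y) by group, inv_mul_eq_one, eq_comm]
  rfl

theorem mul_eq_mul_mul_bracket (x y : H) : x * y = y * x * bracket x y := by
  simp only [bracket]; group

theorem inv_mul_mul_eq_mul_bracket (x y : H) : y⁻¹ * x * y = x * bracket x y := by
  simp only [bracket]; group

theorem bracket_mul_right (x y z : H) :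
    bracket x (y * z) = bracket x z * (z⁻¹ * bracket x y * z) := by
  simp only [bracket]; group

theorem inv_pow_mul_mul_pow {x y : H} (h : Commute (bracket x y) y) (n : ℕ) :
    (y ^ n)⁻¹ * x * y ^ n = x * bracket x y ^ n := by
  induction n with
  | zero => simp
  | succ n ih =>
    calc (y ^ (n + 1))⁻¹ * x * y ^ (n + 1) = y⁻¹ * ((y ^ n)⁻¹ * x * y ^ n) * y := by group
      _ = (y⁻¹ * x * y) * (y⁻¹ * bracket x y ^ n * y) := by rw [ih]; group
      _ = x * bracket x y ^ (n + 1) := by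
        rw [inv_mul_mul_eq_mul_bracket, (h.pow_left n).symm.inv_mul_cancel, mul_assoc, ← pow_succ']

theorem bracket_pow_right_of_commute {x y : H} (h : Commute (bracket x y) y) (n : ℕ) :
    bracket x (y ^ n) = bracket x y ^ n := by
  rw [show bracket x (y ^ n) = x⁻¹ * ((y ^ n)⁻¹ * x * y ^ n) by simp only [bracket]; group,
    inv_pow_mul_mul_pow h, inv_mul_cancel_left]

theorem bracket_pow_eq_one_of_commute {x y : H} {n : ℕ} (h : Commute (bracket x y) y)
    (hy : y ^ n = 1) : bracket x y ^ n = 1 := by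
  rw [← bracket_pow_right_of_commute h, hy, bracket_one_right]

theorem bracket_pow_right {x y : H} (hy : Commute (bracket (bracket x y) y) y)
    (hc : Commute (bracket x y) (bracket (bracket x y) y)) (n : ℕ) :
    bracket x (y ^ n) = bracket x y ^ n * bracket (bracket x y) y ^ n.choose 2 := by
  induction n with
  | zero => simp [bracket]
  | succ n ih =>
    set b := bracket x y
    set d := bracket b y
    rw [pow_succ', bracket_mul_right, ih, inv_pow_mul_mul_pow hy]
    calc b ^ n * d ^ n.choose 2 * (b * d ^ n) = b ^ n * (d ^ n.choose 2 * b) * d ^ n := by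
          simp only [mul_assoc]
      _ = b ^ (n + 1) * (d ^ n.choose 2 * d ^ n) := by
          rw [← (hc.pow_right _).eq, pow_succ]
          simp only [mul_assoc]
      _ = b ^ (n + 1) * d ^ (n + 1).choose 2 := by
          rw [← pow_add, Nat.choose_succ_succ', Nat.choose_one_right, Nat.add_comm (n.choose 2)]

theorem bracket_pow_eq_one_of_odd {x y : H} {n : ℕ} (hn : Odd n)
    (hy : Commute (bracket (bracket x y) y) y)
    (hc : Commute (bracket x y) (bracket (bracket x y) y)) (hyn : y ^ n = 1)
    (hdn : bracket (bracket x y) y ^ n = 1) : bracket x y ^ n = 1 := by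
  obtain ⟨k, hk⟩ := dvd_choose_two_of_odd hn
  have h := bracket_pow_right hy hc n
  rw [hyn, bracket_one_right, hk, pow_mul, hdn, one_pow, mul_one] at h
  exact h.symm

theorem bracket_bracket_comm {x y b : H} (hb : bracket x y = b) (h₁ : Commute b (bracket b x))
    (h₂ : Commute b (bracket b y)) (h₃ : Commute b (bracket (bracket b y) x))
    (h₁₂ : Commute (bracket b x) (bracket b y)) :
    bracket (bracket b x) y = bracket (bracket b y) x := by
  -- expand `[b, x y] = [b, y x b]` on both sides
  have hxy : bracket b (x * y) = bracket b y * (bracket b x * bracket (bracket b x) y) := by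
    rw [bracket_mul_right, inv_mul_mul_eq_mul_bracket]
  have hyx : bracket b (y * x) = bracket b x * (bracket b y * bracket (bracket b y) x) := by
    rw [bracket_mul_right, inv_mul_mul_eq_mul_bracket]
  have hyxb : bracket b (y * x * b) = bracket b (y * x) := by
    rw [bracket_mul_right, bracket_self, one_mul, hyx,
      (h₁.mul_right (h₂.mul_right h₃)).inv_mul_cancel]
  rw [← hb, mul_eq_mul_mul_bracket x y, hb, hyxb, hyx, ← mul_assoc, h₁₂.eq, mul_assoc] at hxy
  exact (mul_left_cancel (mul_left_cancel hxy)).symm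

end Bracket

theorem QZ.exists_nsmul_eq (x : QZ) {n : ℕ} (hn : n ≠ 0) : ∃ y : QZ, n • y = x :=
  ⟨DivisibleBy.div x (n : ℤ), by
    rw [← natCast_zsmul, DivisibleBy.div_cancel x (Int.natCast_ne_zero.mpr hn)]⟩

section CentralExtension

variable {G : Type} [Group G] {f : G → G → QZ}

theorem IsTwoCocycle.apply_one_left (hf : IsTwoCocycle f) (g : G) : f 1 g = f 1 1 := by
  have h := hf 1 1 g
  simpa only [one_mul, sub_self, zero_add, sub_eq_zero] using h

theorem IsTwoCocycle.apply_one_right (hf : IsTwoCocycle f) (g : G) : f g 1 = f 1 1 := by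
  have h := hf g 1 1
  simp only [mul_one, sub_add_cancel, sub_eq_zero] at h
  exact h.symm

theorem IsTwoCoboundary.apply_comm (hf : IsTwoCoboundary f) {g h : G} (hgh : g * h = h * g) :
    f g h = f h g := by
  obtain ⟨c, hc⟩ := hf
  rw [hc, hc, hgh]
  abel

theorem isBicyclic_closure_pair {x y : G} (h : Commute x y) :
    IsBicyclic (Subgroup.closure {x, y}) := by
  refine ⟨fun a b => ?_, x, y, rfl⟩
  have hcomm : ∀ a ∈ ({x, y} : Set G), ∀ b ∈ ({x, y} : Set G), a * b = b * a := by
    simp only [Set.mem_insert_iff, Set.mem_singleton_iff]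
    rintro a (rfl | rfl) b (rfl | rfl)
    exacts [rfl, h.eq, h.eq.symm, rfl]
  exact (Subgroup.isMulCommutative_closure hcomm).is_comm.comm a b

theorem apply_comm_of_isTwoCoboundary_bicyclic
    (hbi : ∀ A : Subgroup G, IsBicyclic A → IsTwoCoboundary (fun a b : ↥A => f ↑a ↑b))
    {x y : G} (h : Commute x y) : f x y = f y x :=
  (hbi _ (isBicyclic_closure_pair h)).apply_comm
    (g := ⟨x, Subgroup.subset_closure (by simp)⟩) (h := ⟨y, Subgroup.subset_closure (by simp)⟩)
    (Subtype.ext h.eq)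

@[ext]
structure IsTwoCocycle.Extension (_ : IsTwoCocycle f) where
  base : G
  fiber : QZ

/-- The identity is `⟨1, -f 1 1⟩` because `f` is not assumed to be normalized. -/
instance (hf : IsTwoCocycle f) : Group hf.Extension where
  mul x y := ⟨x.base * y.base, x.fiber + y.fiber + f x.base y.base⟩
  one := ⟨1, -f 1 1⟩
  inv x := ⟨x.base⁻¹, -x.fiber - f x.base⁻¹ x.base - f 1 1⟩
  mul_assoc x y z := by
    refine IsTwoCocycle.Extension.ext (mul_assoc x.base y.base z.base) ?_
    show x.fiber + y.fiber + f x.base y.base + z.fiber + f (x.base * y.base) z.base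
      = x.fiber + (y.fiber + z.fiber + f y.base z.base) + f x.base (y.base * z.base)
    rw [← sub_eq_zero, ← neg_eq_zero, ← hf x.base y.base z.base]
    abel
  one_mul x := IsTwoCocycle.Extension.ext (one_mul x.base) <|
    show -f 1 1 + x.fiber + f 1 x.base = x.fiber by rw [hf.apply_one_left x.base]; abel
  mul_one x := IsTwoCocycle.Extension.ext (mul_one x.base) <|
    show x.fiber + -f 1 1 + f x.base 1 = x.fiber by rw [hf.apply_one_right x.base]; abel
  inv_mul_cancel x := IsTwoCocycle.Extension.ext (inv_mul_cancel x.base) <|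
    show -x.fiber - f x.base⁻¹ x.base - f 1 1 + x.fiber + f x.base⁻¹ x.base = -f 1 1 by abel

namespace IsTwoCocycle.Extension

variable (hf : IsTwoCocycle f)

theorem fiber_mul (x y : hf.Extension) :
    (x * y).fiber = x.fiber + y.fiber + f x.base y.base := rfl

def proj : hf.Extension →* G where
  toFun := base
  map_one' := rfl
  map_mul' _ _ := rfl

theorem proj_surjective : Function.Surjective (proj hf) :=
  fun g => ⟨⟨g, 0⟩, rfl⟩

theorem commute_of_commute_proj (hsymm : ∀ x y : G, Commute x y → f x y = f y x)
    {X Y : hf.Extension} (h : Commute (proj hf X) (proj hf Y)) : Commute X Y := by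
  refine IsTwoCocycle.Extension.ext h.eq ?_
  rw [fiber_mul, fiber_mul, hsymm X.base Y.base h]
  abel

theorem mk_one_pow (t : QZ) (n : ℕ) :
    (⟨1, t⟩ : hf.Extension) ^ n = ⟨1, n • (t + f 1 1) - f 1 1⟩ := by
  induction n with
  | zero => rw [pow_zero, zero_smul, zero_sub]; rfl
  | succ n ih =>
    rw [pow_succ, ih]
    refine IsTwoCocycle.Extension.ext (one_mul 1) ?_
    show n • (t + f 1 1) - f 1 1 + t + f 1 1 = (n + 1) • (t + f 1 1) - f 1 1
    rw [succ_nsmul]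
    abel

theorem exists_pow_eq_of_proj_eq_one {n : ℕ} (hn : n ≠ 0) {X : hf.Extension}
    (hX : proj hf X = 1) : ∃ Y, proj hf Y = 1 ∧ Y ^ n = X := by
  obtain ⟨v, hv⟩ := QZ.exists_nsmul_eq (X.fiber + f 1 1) hn
  refine ⟨⟨1, v - f 1 1⟩, rfl, ?_⟩
  rw [mk_one_pow, sub_add_cancel, hv, add_sub_cancel_right]
  exact IsTwoCocycle.Extension.ext hX.symm rfl

theorem isTwoCoboundary_of_section (s : G →* hf.Extension)
    (hs : (proj hf).comp s = MonoidHom.id G) : IsTwoCoboundary f := by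
  have hbase : ∀ g, (s g).base = g := fun g => DFunLike.congr_fun hs g
  refine ⟨fun g => -(s g).fiber, fun g h => ?_⟩
  simp only [_root_.map_mul, fiber_mul, hbase]
  abel

end IsTwoCocycle.Extension

end CentralExtension

section Presentation

variable {p : ℕ} {H : Type*} [Group H]

local notation "P" => PresentedGroup (rels p)

def genWord (x y : H) : Gen → H
  | .a1 => x
  | .a2 => y
  | .b => bracket x y
  | .b1 => bracket (bracket x y) x
  | .b2 => bracket (bracket x y) y
  | .g => bracket (bracket (bracket x y) x) y

theorem map_genWord {K : Type*} [Group K] (φ : H →* K) (x y : H) (u : Gen) :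
    φ (genWord x y u) = genWord (φ x) (φ y) u := by
  cases u <;> simp only [genWord, map_bracket]

theorem commute_of_mem_rels {u v : Gen} (h : c (of u) (of v) ∈ rels p) :
    Commute (PresentedGroup.of u : P) (PresentedGroup.of v) := by
  have h1 := PresentedGroup.one_of_mem h
  rw [c_eq_bracket, map_bracket] at h1
  exact bracket_eq_one_iff.mp h1

theorem bracket_of_eq_of_mem_rels {u v w : Gen} (h : c (of u) (of v) * (of w)⁻¹ ∈ rels p) :
    bracket (PresentedGroup.of u : P) (PresentedGroup.of v) = PresentedGroup.of w := by
  have h1 := PresentedGroup.mk_eq_mk_of_mul_inv_mem h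
  rwa [c_eq_bracket, map_bracket] at h1

theorem genWord_of (u : Gen) :
    genWord (PresentedGroup.of .a1 : P) (PresentedGroup.of .a2) u = PresentedGroup.of u := by
  have hb : bracket (PresentedGroup.of .a1 : P) (PresentedGroup.of .a2) = PresentedGroup.of .b :=
    bracket_of_eq_of_mem_rels (by simp [rels])
  have hb1 : bracket (PresentedGroup.of .b : P) (PresentedGroup.of .a1) = PresentedGroup.of .b1 :=
    bracket_of_eq_of_mem_rels (by simp [rels])
  have hb2 : bracket (PresentedGroup.of .b : P) (PresentedGroup.of .a2) = PresentedGroup.of .b2 :=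
    bracket_of_eq_of_mem_rels (by simp [rels])
  have hg : bracket (PresentedGroup.of .b1 : P) (PresentedGroup.of .a2) = PresentedGroup.of .g :=
    bracket_of_eq_of_mem_rels (by simp [rels])
  cases u <;> simp only [genWord, hb, hb1, hb2, hg]

theorem hom_ext {φ ψ : P →* H} (h₁ : φ (PresentedGroup.of .a1) = ψ (PresentedGroup.of .a1))
    (h₂ : φ (PresentedGroup.of .a2) = ψ (PresentedGroup.of .a2)) : φ = ψ :=
  PresentedGroup.ext fun u => by rw [← genWord_of u, map_genWord, map_genWord, h₁, h₂]

theorem genWord_pow_eq_one {x y : H}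
    (hcomm : ∀ u v, c (of u) (of v) ∈ rels p → Commute (genWord x y u) (genWord x y v))
    (hp : Odd p) (hx : x ^ p = 1) (hy : y ^ p = 1) (u : Gen) :
    genWord x y u ^ p = 1 := by
  have hb1 : bracket (bracket x y) x ^ p = 1 :=
    bracket_pow_eq_one_of_commute (hcomm .a1 .b1 (by simp [rels])).symm hx
  have hb2 : bracket (bracket x y) y ^ p = 1 :=
    bracket_pow_eq_one_of_commute (hcomm .a2 .b2 (by simp [rels])).symm hy
  cases u
  · exact hx
  · exact hy
  · exact bracket_pow_eq_one_of_odd hp (hcomm .a2 .b2 (by simp [rels])).symm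
      (hcomm .b .b2 (by simp [rels])) hy hb2
  · exact hb1
  · exact hb2
  · exact bracket_pow_eq_one_of_commute (hcomm .a2 .g (by simp [rels])).symm hy

theorem lift_genWord_eq_one {x y : H}
    (hcomm : ∀ u v, c (of u) (of v) ∈ rels p → Commute (genWord x y u) (genWord x y v))
    (hjac : bracket (genWord x y .b2) x = genWord x y .g)
    (hpow : ∀ u, genWord x y u ^ p = 1) : ∀ r ∈ rels p, FreeGroup.lift (genWord x y) r = 1 := by
  have hrel : ∀ u v w, bracket (genWord x y u) (genWord x y v) = genWord x y w →
      FreeGroup.lift (genWord x y) (c (of u) (of v) * (of w)⁻¹) = 1 := fun u v w h => by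
    rw [_root_.map_mul, _root_.map_inv, c_eq_bracket, map_bracket, FreeGroup.lift_apply_of,
      FreeGroup.lift_apply_of, FreeGroup.lift_apply_of, h, mul_inv_cancel]
  have hcomm' : ∀ u v, c (of u) (of v) ∈ rels p →
      FreeGroup.lift (genWord x y) (c (of u) (of v)) = 1 := fun u v h => by
    rw [c_eq_bracket, map_bracket, FreeGroup.lift_apply_of, FreeGroup.lift_apply_of,
      bracket_eq_one_iff]
    exact hcomm u v h
  have hpow' : ∀ u, FreeGroup.lift (genWord x y) (of u ^ p) = 1 := fun u => by
    rw [_root_.map_pow, FreeGroup.lift_apply_of, hpow]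
  intro r hr
  simp only [rels, Set.mem_insert_iff, Set.mem_singleton_iff] at hr
  obtain rfl | rfl | rfl | rfl | rfl | hr := hr
  iterate 4 exact hrel _ _ _ rfl
  · exact hrel _ _ _ hjac
  obtain rfl | rfl | rfl | rfl | rfl | rfl | rfl | rfl | rfl | rfl | hr := hr
  iterate 10 exact hcomm' _ _ (by simp [rels])
  obtain rfl | rfl | rfl | rfl | rfl | rfl := hr <;> exact hpow' _

theorem exists_lift_pow_eq_one {E G : Type*} [Group E] [Group G] (π : E →* G) {n : ℕ}
    (hker : ∀ Z, π Z = 1 → ∀ W, Commute Z W) (hdiv : ∀ Z, π Z = 1 → ∃ Y, π Y = 1 ∧ Y ^ n = Z)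
    {X : E} (hX : π X ^ n = 1) : ∃ A, π A = π X ∧ A ^ n = 1 := by
  obtain ⟨Y, hY, hYn⟩ := hdiv (X ^ n)⁻¹ (by rw [_root_.map_inv, _root_.map_pow, hX, inv_one])
  exact ⟨X * Y, by rw [_root_.map_mul, hY, mul_one], by
    rw [(hker Y hY X).symm.mul_pow, hYn, mul_inv_cancel]⟩

theorem exists_section {E : Type*} [Group E] (π : E →* P) (hp : Odd p)
    (hπ : Function.Surjective π) (hcomm : ∀ X Y, Commute (π X) (π Y) → Commute X Y)
    (hdiv : ∀ Z, π Z = 1 → ∃ Y, π Y = 1 ∧ Y ^ p = Z) :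
    ∃ s : P →* E, π.comp s = MonoidHom.id P := by
  have hker : ∀ Z, π Z = 1 → ∀ W, Commute Z W :=
    fun Z hZ W => hcomm Z W (by rw [hZ]; exact Commute.one_left _)
  have hpow : ∀ u, (PresentedGroup.of u : P) ^ p = 1 :=
    fun u => PresentedGroup.one_of_mem (by cases u <;> simp [rels])
  obtain ⟨x₀, hx₀⟩ := hπ (PresentedGroup.of .a1)
  obtain ⟨y₀, hy₀⟩ := hπ (PresentedGroup.of .a2)
  obtain ⟨x, hx, hxp⟩ := exists_lift_pow_eq_one π hker hdiv (X := x₀) (by rw [hx₀, hpow])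
  obtain ⟨y, hy, hyp⟩ := exists_lift_pow_eq_one π hker hdiv (X := y₀) (by rw [hy₀, hpow])
  rw [hx₀] at hx
  rw [hy₀] at hy
  have hw : ∀ u, π (genWord x y u) = PresentedGroup.of u := fun u => by
    rw [map_genWord, hx, hy, genWord_of]
  have hwc : ∀ u v, c (of u) (of v) ∈ rels p → Commute (genWord x y u) (genWord x y v) :=
    fun u v h => hcomm _ _ (by rw [hw, hw]; exact commute_of_mem_rels h)
  have hg : π (bracket (genWord x y .b2) x) = PresentedGroup.of .g := by
    rw [map_bracket, hw, hx]
    exact bracket_of_eq_of_mem_rels (by simp [rels])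
  have hbg : Commute (genWord x y .b) (bracket (genWord x y .b2) x) :=
    hcomm _ _ (by rw [hw, hg]; exact commute_of_mem_rels (by simp [rels]))
  have hjac : bracket (genWord x y .b2) x = genWord x y .g :=
    (bracket_bracket_comm rfl (hwc .b .b1 (by simp [rels])) (hwc .b .b2 (by simp [rels])) hbg
      (hwc .b1 .b2 (by simp [rels]))).symm
  refine ⟨PresentedGroup.toGroup
    (lift_genWord_eq_one hwc hjac (genWord_pow_eq_one hwc hp hxp hyp)), hom_ext ?_ ?_⟩
  · rw [MonoidHom.comp_apply, PresentedGroup.toGroup.of]; exact hx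
  · rw [MonoidHom.comp_apply, PresentedGroup.toGroup.of]; exact hy

end Presentation

theorem bogomolov_trivial_Phi40_general (p : ℕ) (hp : p.Prime) (h3 : 3 < p) :
    BogomolovMultiplierIsTrivial (PresentedGroup (rels p)) := by
  intro f hf hbi
  obtain ⟨s, hs⟩ := exists_section (IsTwoCocycle.Extension.proj hf) (hp.odd_of_ne_two (by omega))
    (IsTwoCocycle.Extension.proj_surjective hf)
    (fun _ _ => IsTwoCocycle.Extension.commute_of_commute_proj hf
      (fun _ _ => apply_comm_of_isTwoCoboundary_bicyclic hbi))
    (fun _ => IsTwoCocycle.Extension.exists_pow_eq_of_proj_eq_one hf hp.ne_zero)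
  exact IsTwoCocycle.Extension.isTwoCoboundary_of_section hf s hs

theorem bogomolov_trivial_Phi40 (p : ℕ) (hp : p.Prime) (h3 : 3 < p)
    (hcard : Nat.card (PresentedGroup (rels p)) = p ^ 6) :
    BogomolovMultiplierIsTrivial (PresentedGroup (rels p)) :=
  bogomolov_trivial_Phi40_general p hp h3

end Stmt13
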